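/- Let f be continuous on [0,1]. Let u be twice continuously differentiable on [0,1] with −u''(x) = f(x) for all x ∈ [0,1] and u(0) = u(1) = 0; let v be continuously differentiable on [0,1] with v(0) = v(1) = 0; let z be continuously differentiable on [0,1]. Then (∫₀¹((v−u)')² dx)^{1/2} ≤ (∫₀¹(v'+z)² dx)^{1/2} + ( ∫₀¹ ( ∫₀^x (f(η) − z'(η)) dη )² dx )^{1/2}. -/

import Mathlib

open Set intervalIntegral MeasureTheory

/-!
Since `−u'' = f`, the flux `−u' − z` differs from the integrated residual
`R x = ∫₀ˣ (f − z')` by a constant `c`. The error `e = v' − u'` has mean zero because `v − u`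
vanishes at both ends, so it is `L²`-orthogonal to `c`, and
`‖e‖² = ⟨e, v' + z⟩ + ⟨e, R⟩ ≤ ‖e‖ (‖v' + z‖ + ‖R‖)` by Cauchy–Schwarz.
-/

theorem integral_mul_le_sqrt_mul_sqrt {α : Type*} [MeasurableSpace α] {μ : Measure α}
    {g h : α → ℝ} (hg : MemLp g 2 μ) (hh : MemLp h 2 μ) :
    ∫ x, g x * h x ∂μ ≤ √(∫ x, g x ^ 2 ∂μ) * √(∫ x, h x ^ 2 ∂μ) := by
  have hrpow : ∀ y : ℝ, ‖y‖ ^ (2:ℝ) = y ^ 2 := fun y => by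
    rw [Real.rpow_two, Real.norm_eq_abs, sq_abs]
  rw [← ENNReal.ofReal_ofNat] at hg hh
  have holder := integral_mul_norm_le_Lp_mul_Lq Real.HolderConjugate.two_two hg hh
  simp only [hrpow, ← Real.sqrt_eq_rpow] at holder
  calc ∫ x, g x * h x ∂μ ≤ ‖∫ x, g x * h x ∂μ‖ := Real.le_norm_self _
    _ ≤ ∫ x, ‖g x * h x‖ ∂μ := norm_integral_le_integral_norm _
    _ ≤ _ := by simpa only [norm_mul] using holder

theorem ContinuousOn.memLp_two_restrict_Ioc {g : ℝ → ℝ} {a b : ℝ}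
    (hg : ContinuousOn g (Icc a b)) : MemLp g 2 (volume.restrict (Ioc a b)) :=
  (memLp_two_iff_integrable_sq
      ((hg.mono Ioc_subset_Icc_self).aestronglyMeasurable measurableSet_Ioc)).2
    (((hg.pow 2).integrableOn_Icc).mono_set Ioc_subset_Icc_self)

theorem intervalIntegral.integral_mul_le_sqrt_mul_sqrt {g h : ℝ → ℝ} {a b : ℝ} (hab : a ≤ b)
    (hg : ContinuousOn g (Icc a b)) (hh : ContinuousOn h (Icc a b)) :
    ∫ x in a..b, g x * h x ≤ √(∫ x in a..b, g x ^ 2) * √(∫ x in a..b, h x ^ 2) := by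
  simp only [integral_of_le hab]
  exact _root_.integral_mul_le_sqrt_mul_sqrt hg.memLp_two_restrict_Ioc hh.memLp_two_restrict_Ioc

theorem Real.sqrt_le_of_le_sqrt_mul {A s : ℝ} (hs : 0 ≤ s) (h : A ≤ √A * s) : √A ≤ s := by
  rcases (Real.sqrt_nonneg A).eq_or_lt with h0 | hpos
  · rwa [← h0]
  · have hA : 0 < A := Real.sqrt_pos.1 hpos
    nlinarith [Real.mul_self_sqrt hA.le]

theorem intervalIntegral.integral_eq_sub_of_hasDerivWithinAt_Icc {g g' : ℝ → ℝ} {a b : ℝ}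
    (hab : a ≤ b)     (hg : ∀ x ∈ Icc a b, HasDerivWithinAt g (g' x) (Icc a b) x)
    (hg' : ContinuousOn g' (Icc a b)) : ∫ x in a..b, g' x = g b - g a :=
  integral_eq_sub_of_hasDeriv_right_of_le hab
    (fun x hx => (hg x hx).continuousWithinAt)
    (fun x hx => (hg x (Ioo_subset_Icc_self hx)).mono_of_mem_nhdsWithin
      (Icc_mem_nhdsGT_of_mem (Ioo_subset_Ico_self hx)))
    (hg'.intervalIntegrable_of_Icc hab)

theorem sqrt_integral_sq_le_of_integral_eq_zero {e y r : ℝ → ℝ} {a b c : ℝ} (hab : a ≤ b)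
    (hy : ContinuousOn y (Icc a b)) (hr : ContinuousOn r (Icc a b))
    (hsum : ∀ x ∈ Icc a b, e x = y x + (c + r x)) (hmean : ∫ x in a..b, e x = 0) :
    √(∫ x in a..b, e x ^ 2) ≤ √(∫ x in a..b, y x ^ 2) + √(∫ x in a..b, r x ^ 2) := by
  have he : ContinuousOn e (Icc a b) := (hy.add (continuousOn_const.add hr)).congr hsum
  have iy : IntervalIntegrable (fun x => e x * y x) volume a b :=
    (he.mul hy).intervalIntegrable_of_Icc hab
  have ic : IntervalIntegrable (fun x => c * e x) volume a b :=
    (he.intervalIntegrable_of_Icc hab).const_mul c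
  have ir : IntervalIntegrable (fun x => e x * r x) volume a b :=
    (he.mul hr).intervalIntegrable_of_Icc hab
  have hsplit : ∫ x in a..b, e x ^ 2 = (∫ x in a..b, e x * y x) + ∫ x in a..b, e x * r x := by
    have hpoint : EqOn (fun x => e x ^ 2) (fun x => e x * y x + (c * e x + e x * r x))
        (uIcc a b) := by
      intro x hx
      rw [uIcc_of_le hab] at hx
      simp only [hsum x hx]
      ring
    rw [integral_congr hpoint, integral_add iy (ic.add ir), integral_add ic ir,
      intervalIntegral.integral_const_mul, hmean, mul_zero, zero_add]
  refine Real.sqrt_le_of_le_sqrt_mul (by positivity) ?_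
  calc ∫ x in a..b, e x ^ 2 = (∫ x in a..b, e x * y x) + ∫ x in a..b, e x * r x := hsplit
    _ ≤ √(∫ x in a..b, e x ^ 2) * √(∫ x in a..b, y x ^ 2)
        + √(∫ x in a..b, e x ^ 2) * √(∫ x in a..b, r x ^ 2) :=
      add_le_add (integral_mul_le_sqrt_mul_sqrt hab he hy) (integral_mul_le_sqrt_mul_sqrt hab he hr)
    _ = _ := by ring

theorem integrated_residual_majorant_1d_general
    (f u u' u'' v v' z z' : ℝ → ℝ)
    (hf : ContinuousOn f (Icc 0 1))
    (hu' : ∀ x ∈ Icc (0:ℝ) 1, HasDerivWithinAt u (u' x) (Icc 0 1) x)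
    (hu'' : ∀ x ∈ Icc (0:ℝ) 1, HasDerivWithinAt u' (u'' x) (Icc 0 1) x)
    (hode : ∀ x ∈ Icc (0:ℝ) 1, -u'' x = f x)
    (hu0 : u 0 = 0) (hu1 : u 1 = 0)
    (hv' : ∀ x ∈ Icc (0:ℝ) 1, HasDerivWithinAt v (v' x) (Icc 0 1) x)
    (hv'c : ContinuousOn v' (Icc 0 1))
    (hv0 : v 0 = 0) (hv1 : v 1 = 0)
    (hz' : ∀ x ∈ Icc (0:ℝ) 1, HasDerivWithinAt z (z' x) (Icc 0 1) x)
    (hz'c : ContinuousOn z' (Icc 0 1)) :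
    Real.sqrt (∫ x in (0:ℝ)..1, (v' x - u' x) ^ 2) ≤
      Real.sqrt (∫ x in (0:ℝ)..1, (v' x + z x) ^ 2) +
        Real.sqrt (∫ x in (0:ℝ)..1, (∫ η in (0:ℝ)..x, (f η - z' η)) ^ 2) := by
  have hu'c : ContinuousOn u' (Icc 0 1) := fun x hx => (hu'' x hx).continuousWithinAt
  have hzc : ContinuousOn z (Icc 0 1) := fun x hx => (hz' x hx).continuousWithinAt
  have hresidual : ContinuousOn (fun x => f x - z' x) (Icc 0 1) := hf.sub hz'c
  have hprimitive : ContinuousOn (fun x => ∫ η in (0:ℝ)..x, (f η - z' η)) (Icc 0 1) := by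
    rw [← uIcc_of_le zero_le_one] at hresidual ⊢
    exact continuousOn_primitive_interval (hresidual.integrableOn_compact isCompact_uIcc)
  have hflux : ∀ x ∈ Icc (0:ℝ) 1,
      -u' x - z x = (-u' 0 - z 0) + ∫ η in (0:ℝ)..x, (f η - z' η) := by
    intro x hx
    have hsub : Icc 0 x ⊆ Icc 0 1 := Icc_subset_Icc_right hx.2
    rw [integral_eq_sub_of_hasDerivWithinAt_Icc (g := fun t => -u' t - z t) hx.1
      (fun t ht => ?_) (hresidual.mono hsub)]
    · ring
    · rw [← hode t (hsub ht)]
      exact ((hu'' t (hsub ht)).neg.sub (hz' t (hsub ht))).mono hsub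
  have hmean : ∫ x in (0:ℝ)..1, (v' x - u' x) = 0 := by
    rw [integral_eq_sub_of_hasDerivWithinAt_Icc zero_le_one
      (fun x hx => (hv' x hx).sub (hu' x hx)) (hv'c.sub hu'c)]
    simp only [Pi.sub_apply, hu0, hu1, hv0, hv1, sub_self]
  exact sqrt_integral_sq_le_of_integral_eq_zero (c := -u' 0 - z 0) zero_le_one (hv'c.add hzc)
    hprimitive (fun x hx => by linarith [hflux x hx]) hmean

/-- One-dimensional instance of the integrated-residual majorant (1.6) for the
Poisson Dirichlet problem `−u'' = f`, `u(0) = u(1) = 0`. -/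
theorem integrated_residual_majorant_1d
    (f u u' u'' v v' z z' : ℝ → ℝ)
    (hf : ContinuousOn f (Icc 0 1))
    (hu' : ∀ x ∈ Icc (0:ℝ) 1, HasDerivWithinAt u (u' x) (Icc 0 1) x)
    (hu'' : ∀ x ∈ Icc (0:ℝ) 1, HasDerivWithinAt u' (u'' x) (Icc 0 1) x)
    (hu''c : ContinuousOn u'' (Icc 0 1))
    (hode : ∀ x ∈ Icc (0:ℝ) 1, -u'' x = f x)
    (hu0 : u 0 = 0) (hu1 : u 1 = 0)
    (hv' : ∀ x ∈ Icc (0:ℝ) 1, HasDerivWithinAt v (v' x) (Icc 0 1) x)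
    (hv'c : ContinuousOn v' (Icc 0 1))
    (hv0 : v 0 = 0) (hv1 : v 1 = 0)
    (hz' : ∀ x ∈ Icc (0:ℝ) 1, HasDerivWithinAt z (z' x) (Icc 0 1) x)
    (hz'c : ContinuousOn z' (Icc 0 1)) :
    Real.sqrt (∫ x in (0:ℝ)..1, (v' x - u' x) ^ 2) ≤
      Real.sqrt (∫ x in (0:ℝ)..1, (v' x + z x) ^ 2) +
        Real.sqrt (∫ x in (0:ℝ)..1, (∫ η in (0:ℝ)..x, (f η - z' η)) ^ 2) :=
  integrated_residual_majorant_1d_general f u u' u'' v v' z z' hf hu' hu'' hode hu0 hu1 hv' hv'c hv0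
    hv1 hz' hz'c
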